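/- Let l ∈ {K, K4, KD4, S4}, let φ be a modal formula, and let S be a view (with respect to φ) that is consistent for l and l-complete, with C(S) ≠ ∅. Then: if l = K, the formula th(p(S)) ∧ ⋀_{c∈C(S)} ◇th(c) ∧ □⋁_{c∈C(S)} th(c) is satisfiable for K; and if l ∈ {K4, KD4, S4}, the formula th(p(S)) ∧ ⋀_{c∈C(S)} ◇th(c) is satisfiable for l. -/

import Mathlib

/-- Modal formulas in negation normal form, as in the paper:
φ ::= ⊥ | ⊤ | p | ¬p | φ∧φ | φ∨φ | □φ | ◇φ. -/
inductive Form : Type where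
  | bot : Form
  | top : Form
  | pos : ℕ → Form
  | npos : ℕ → Form
  | and : Form → Form → Form
  | or : Form → Form → Form
  | box : Form → Form
  | dia : Form → Form
deriving DecidableEq

namespace Form

/-- Negation, defined as usual (by De Morgan dualities). -/
def neg : Form → Form
  | bot => top
  | top => bot
  | pos p => npos p
  | npos p => pos p
  | and φ ψ => or φ.neg ψ.neg
  | or φ ψ => and φ.neg ψ.neg
  | box φ => dia φ.neg
  | dia φ => box φ.neg

/-- Implication φ → ψ, defined as usual. -/
def imp (φ ψ : Form) : Form := or φ.neg ψ

/-- Bi-implication φ ↔ ψ, defined as usual. -/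
def biimp (φ ψ : Form) : Form := and (imp φ ψ) (imp ψ φ)

/-- P(φ): the set of propositional variables occurring in φ. -/
def vars : Form → Finset ℕ
  | bot => ∅
  | top => ∅
  | pos p => {p}
  | npos p => {p}
  | and φ ψ => φ.vars ∪ ψ.vars
  | or φ ψ => φ.vars ∪ ψ.vars
  | box φ => φ.vars
  | dia φ => φ.vars

/-- Modal depth. -/
def md : Form → ℕ
  | bot => 0
  | top => 0
  | pos _ => 0
  | npos _ => 0
  | and φ ψ => max φ.md ψ.md
  | or φ ψ => max φ.md ψ.md
  | box φ => φ.md + 1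
  | dia φ => φ.md + 1

/-- sub(φ): the set of subformulas of φ. -/
def subf : Form → Finset Form
  | bot => {bot}
  | top => {top}
  | pos p => {pos p}
  | npos p => {npos p}
  | and φ ψ => insert (and φ ψ) (φ.subf ∪ ψ.subf)
  | or φ ψ => insert (or φ ψ) (φ.subf ∪ ψ.subf)
  | box φ => insert (box φ) φ.subf
  | dia φ => insert (dia φ) φ.subf

/-- s̄ub(φ) = sub(φ) ∪ {¬ψ : ψ ∈ sub(φ)}. -/
def subBar (φ : Form) : Finset Form := φ.subf ∪ φ.subf.image neg

/-- □^k φ : k nested boxes. -/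
def boxIter : ℕ → Form → Form
  | 0, φ => φ
  | n + 1, φ => box (boxIter n φ)

def isDia : Form → Bool
  | dia _ => true
  | _ => false

def isBox : Form → Bool
  | box _ => true
  | _ => false

end Form

/-- Big conjunction over a finite set of formulas (⋀∅ = ⊤). -/
noncomputable def bigAnd (s : Finset Form) : Form := s.toList.foldr Form.and Form.top

/-- Big disjunction over a finite set of formulas (⋁∅ = ⊥). -/
noncomputable def bigOr (s : Finset Form) : Form := s.toList.foldr Form.or Form.bot

/-- th(a) = ⋀ a. -/
noncomputable def th (a : Finset Form) : Form := bigAnd a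

/-- A finite Kripke model: a nonempty finite set of states, an accessibility
relation and a valuation. -/
structure Model : Type 1 where
  W : Type
  nonempty : Nonempty W
  finite : Finite W
  R : W → W → Prop
  V : W → Set ℕ

/-- Satisfaction M,w ⊨ φ. -/
def Model.sat (M : Model) : M.W → Form → Prop
  | _, .bot => False
  | _, .top => True
  | w, .pos p => p ∈ M.V w
  | w, .npos p => p ∉ M.V w
  | w, .and φ ψ => M.sat w φ ∧ M.sat w ψ
  | w, .or φ ψ => M.sat w φ ∨ M.sat w ψ
  | w, .box φ => ∀ v, M.R w v → M.sat v φ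
  | w, .dia φ => ∃ v, M.R w v ∧ M.sat v φ

/-- The six base logics K, D, T, K4, KD4, S4. -/
inductive BaseLogic : Type where
  | K | D | T | K4 | KD4 | S4
deriving DecidableEq

/-- A logic: a base logic, possibly extended by axiom 5. -/
structure Logic : Type where
  base : BaseLogic
  has5 : Bool
deriving DecidableEq

def Logic.K : Logic := ⟨.K, false⟩
def Logic.D : Logic := ⟨.D, false⟩
def Logic.T : Logic := ⟨.T, false⟩
def Logic.K4 : Logic := ⟨.K4, false⟩
def Logic.KD4 : Logic := ⟨.KD4, false⟩
def Logic.S4 : Logic := ⟨.S4, false⟩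

/-- l + 5. -/
def BaseLogic.plus5 (b : BaseLogic) : Logic := ⟨b, true⟩

/-- M is a model for the logic l (frame conditions). -/
def Model.IsFor (M : Model) (l : Logic) : Prop :=
  (match l.base with
    | .K => True
    | .D => ∀ w, ∃ v, M.R w v
    | .T => ∀ w, M.R w w
    | .K4 => ∀ a b c, M.R a b → M.R b c → M.R a c
    | .KD4 => (∀ w, ∃ v, M.R w v) ∧ (∀ a b c, M.R a b → M.R b c → M.R a c)
    | .S4 => (∀ w, M.R w w) ∧ (∀ a b c, M.R a b → M.R b c → M.R a c))
  ∧ (l.has5 = true → ∀ a b c, M.R a b → M.R a c → M.R b c)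

/-- φ is satisfiable for l: satisfied at some state of some finite model for l. -/
def Satisfiable (l : Logic) (φ : Form) : Prop :=
  ∃ M : Model, M.IsFor l ∧ ∃ w : M.W, M.sat w φ

/-- φ is valid for l: satisfied at every state of every finite model for l. -/
def Valid (l : Logic) (φ : Form) : Prop :=
  ∀ M : Model, M.IsFor l → ∀ w : M.W, M.sat w φ

/-- φ is complete for l: for every ψ ∈ L(P(φ)), φ→ψ or φ→¬ψ is valid for l. -/
def Complete (l : Logic) (φ : Form) : Prop :=
  ∀ ψ : Form, ψ.vars ⊆ φ.vars → (Valid l (φ.imp ψ) ∨ Valid l (φ.imp ψ.neg))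

/-- Z is a bisimulation modulo P from M to M'. -/
def IsBisim (P : Set ℕ) (M M' : Model) (Z : M.W → M'.W → Prop) : Prop :=
  (∃ s s', Z s s') ∧
  ∀ s s', Z s s' →
    (M.V s ∩ P = M'.V s' ∩ P) ∧
    (∀ t, M.R s t → ∃ t', M'.R s' t' ∧ Z t t') ∧
    (∀ t', M'.R s' t' → ∃ t, M.R s t ∧ Z t t')

/-- (M,a) ∼_P (M',a'). -/
def Bisimilar (P : Set ℕ) (M : Model) (a : M.W) (M' : Model) (a' : M'.W) : Prop :=
  ∃ Z, IsBisim P M M' Z ∧ Z a a'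

/-- (M,a) ≡_P (M',a'): the two pointed models satisfy the same formulas of L(P). -/
def EquivP (P : Set ℕ) (M : Model) (a : M.W) (M' : Model) (a' : M'.W) : Prop :=
  ∀ φ : Form, ↑φ.vars ⊆ P → (M.sat a φ ↔ M'.sat a' φ)

/-- (M,s) is flat (for base logic l, with axiom 5): the carrier is {s}∪W and
R = R1 ∪ R2 with R1 ⊆ {s}×W, R2 an equivalence relation on W, and s ∈ W if
l ∈ {T,S4}. -/
def Flat (l : BaseLogic) (M : Model) (s : M.W) : Prop :=
  ∃ W : Set M.W, (∀ w, w = s ∨ w ∈ W) ∧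
    ∃ R1 R2 : M.W → M.W → Prop,
      (∀ x y, M.R x y ↔ (R1 x y ∨ R2 x y)) ∧
      (∀ x y, R1 x y → x = s ∧ y ∈ W) ∧
      (∀ x y, R2 x y → x ∈ W ∧ y ∈ W) ∧
      (∀ x ∈ W, R2 x x) ∧
      (∀ x y, R2 x y → R2 y x) ∧
      (∀ x y z, R2 x y → R2 y z → R2 x z) ∧
      ((l = .T ∨ l = .S4) → s ∈ W)

/-- A maximal state for l with respect to φ: a maximally l-consistent subset
of s̄ub(φ). -/
def MaxState (l : Logic) (φ : Form) (a : Finset Form) : Prop :=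
  a ⊆ φ.subBar ∧ Satisfiable l (th a) ∧ ∀ ψ ∈ φ.subf, ψ ∈ a ∨ ψ.neg ∈ a

/-- D(x) = {◇ψ : ◇ψ ∈ x}. -/
def DSet (x : Finset Form) : Finset Form := x.filter (fun ψ => ψ.isDia = true)

/-- B(x) = {□ψ : □ψ ∈ x}. -/
def BSet (x : Finset Form) : Finset Form := x.filter (fun ψ => ψ.isBox = true)

/-- A view: a parent-state and a finite set of children-states. -/
structure View : Type where
  parent : Finset Form
  children : Finset (Finset Form)

/-- The view is with respect to φ: all its states are subsets of s̄ub(φ). -/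
def View.WF (φ : Form) (S : View) : Prop :=
  S.parent ⊆ φ.subBar ∧ ∀ c ∈ S.children, c ⊆ φ.subBar

/-- A set of formulas is l-closed. -/
def LClosed (l : Logic) (P : Finset ℕ) (s : Finset Form) : Prop :=
  (∀ φ1 φ2 : Form, Form.and φ1 φ2 ∈ s → φ1 ∈ s ∧ φ2 ∈ s) ∧
  (∀ φ1 φ2 : Form, Form.or φ1 φ2 ∈ s → φ1 ∈ s ∨ φ2 ∈ s) ∧
  ((l.base = .T ∨ l.base = .S4) → ∀ ψ : Form, Form.box ψ ∈ s → ψ ∈ s) ∧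
  (∀ p ∈ P, Form.pos p ∈ s ∨ Form.npos p ∈ s)

/-- The view S is l-complete. -/
def ViewLComplete (l : Logic) (P : Finset ℕ) (S : View) : Prop :=
  LClosed l P S.parent ∧
  (∀ c ∈ S.children, LClosed l P c) ∧
  (∀ ψ : Form, Form.dia ψ ∈ S.parent → ∃ c ∈ S.children, ψ ∈ c) ∧
  (∀ ψ : Form, Form.box ψ ∈ S.parent → ∀ c ∈ S.children, ψ ∈ c) ∧
  ((l.base = .K4 ∨ l.base = .KD4 ∨ l.base = .S4) →
    ∀ ψ : Form, Form.box ψ ∈ S.parent → ∀ c ∈ S.children, Form.box ψ ∈ c) ∧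
  (l.base = .KD4 → S.children.Nonempty)

/-- The view S is consistent for l: every one of its states is consistent. -/
def ViewConsistent (l : Logic) (S : View) : Prop :=
  Satisfiable l (th S.parent) ∧ ∀ c ∈ S.children, Satisfiable l (th c)

/-- d = max{md(th(c')) : c' ∈ C(S)}. -/
noncomputable def childDepth (S : View) : ℕ := S.children.sup (fun c => (th c).md)

/-- A K-maximal child-state: a maximally K-consistent subset of s̄ub_d(φ). -/
def KMaxChild (φ : Form) (d : ℕ) (c : Finset Form) : Prop :=
  c ⊆ φ.subBar.filter (fun ψ => ψ.md ≤ d) ∧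
  Satisfiable Logic.K (th c) ∧
  ∀ ψ ∈ φ.subf, ψ.md ≤ d → (ψ ∈ c ∨ ψ.neg ∈ c)

/-- S' completes S (for logic l, with respect to φ). -/
def ViewCompletes (l : Logic) (φ : Form) (S' S : View) : Prop :=
  ViewLComplete l φ.vars S' ∧
  S.parent ⊆ S'.parent ∧
  (∀ a ∈ S.children, ∃ a' ∈ S'.children, a ⊆ a') ∧
  (l.base = .K → ∀ a' ∈ S'.children, KMaxChild φ (childDepth S') a') ∧
  (l.base ≠ .K → ∀ a' ∈ S'.children, MaxState l φ a')

/-- The depth-0 normal form ⋀_{p∈S} p ∧ ⋀_{p∈P∖S} ¬p. -/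
noncomputable def nf0 (P S : Finset ℕ) : Form :=
  Form.and (bigAnd (S.image Form.pos)) (bigAnd ((P \ S).image Form.npos))

/-- Fine's normal forms F_P^d. -/
noncomputable def NF (P : Finset ℕ) : ℕ → Set Form
  | 0 => { χ | ∃ S ⊆ P, χ = nf0 P S }
  | d + 1 => { χ | ∃ S : Finset Form, ↑S ⊆ NF P d ∧ ∃ S0 ⊆ P,
      χ = Form.and (nf0 P S0)
            (Form.and (bigAnd (S.image Form.dia)) (Form.box (bigOr S))) }

/-- φ is complete up to its depth for l. -/
def CompleteUpToDepth (l : Logic) (φ : Form) : Prop :=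
  ∀ ψ : Form, ψ.vars ⊆ φ.vars → ψ.md ≤ φ.md →
    (Valid l (φ.imp ψ) ∨ Valid l (φ.imp ψ.neg))

/-! Glue fresh copies of models of the children-states under a new root whose valuation is read off
the literals of the parent-state. The root sees the chosen point of each copy and, for transitive
logics, everything that point sees; for S4 it also sees itself. Then every formula of the parent
holds at the root by induction on the formula: l-closure handles the propositional connectives,
l-completeness the diamonds and boxes, and the consistency of the parent rules out clashing
literals. -/

section Satisfaction

variable (M : Model) (x : M.W)

lemma Model.sat_foldr_and (L : List Form) :
    M.sat x (L.foldr Form.and Form.top) ↔ ∀ ψ ∈ L, M.sat x ψ := by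
  induction L <;> simp_all [Model.sat]

lemma Model.sat_foldr_or (L : List Form) :
    M.sat x (L.foldr Form.or Form.bot) ↔ ∃ ψ ∈ L, M.sat x ψ := by
  induction L <;> simp_all [Model.sat]

lemma Model.sat_bigAnd (s : Finset Form) : M.sat x (bigAnd s) ↔ ∀ ψ ∈ s, M.sat x ψ := by
  simp [bigAnd, Model.sat_foldr_and]

lemma Model.sat_bigOr (s : Finset Form) : M.sat x (bigOr s) ↔ ∃ ψ ∈ s, M.sat x ψ := by
  simp [bigOr, Model.sat_foldr_or]

lemma Model.sat_th (s : Finset Form) : M.sat x (th s) ↔ ∀ ψ ∈ s, M.sat x ψ :=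
  M.sat_bigAnd x s

end Satisfaction

lemma bot_notMem_of_satisfiable {l : Logic} {s : Finset Form} (h : Satisfiable l (th s)) :
    Form.bot ∉ s := by
  obtain ⟨M, -, x, hx⟩ := h
  exact fun hbot => (M.sat_th x s).mp hx _ hbot

lemma pos_notMem_of_satisfiable {l : Logic} {s : Finset Form} (h : Satisfiable l (th s))
    {p : ℕ} (hp : Form.npos p ∈ s) : Form.pos p ∉ s := by
  obtain ⟨M, -, x, hx⟩ := h
  exact fun hpos => (M.sat_th x s).mp hx _ hp ((M.sat_th x s).mp hx _ hpos)

namespace RootedSum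

variable {ι : Type} (M : ι → Model) (w : ∀ i, (M i).W) (rt tr : Prop)

/-- `none` is the fresh root; `rt` makes it reflexive and `tr` lets it see everything the chosen
points `w i` see. -/
inductive R : Option ((i : ι) × (M i).W) → Option ((i : ι) × (M i).W) → Prop
  | root_self : rt → R none none
  | root_point (i : ι) : R none (some ⟨i, w i⟩)
  | root_succ (i : ι) (v : (M i).W) : tr → (M i).R (w i) v → R none (some ⟨i, v⟩)
  | inner (i : ι) (a b : (M i).W) : (M i).R a b → R (some ⟨i, a⟩) (some ⟨i, b⟩)

def V (Vr : Set ℕ) : Option ((i : ι) × (M i).W) → Set ℕ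
  | none => Vr
  | some x => (M x.1).V x.2

variable [Finite ι]

def model (Vr : Set ℕ) : Model where
  W := Option ((i : ι) × (M i).W)
  nonempty := ⟨none⟩
  finite := by
    have : ∀ i, Finite (M i).W := fun i => (M i).finite
    infer_instance
  R := R M w rt tr
  V := V M Vr

variable {M w rt tr} {Vr : Set ℕ}

lemma sat_some_iff (ψ : Form) (i : ι) (v : (M i).W) :
    (model M w rt tr Vr).sat (some ⟨i, v⟩) ψ ↔ (M i).sat v ψ := by
  induction ψ generalizing v with
  | bot | top | pos | npos => rfl
  | and _ _ ih₁ ih₂ => exact and_congr (ih₁ v) (ih₂ v)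
  | or _ _ ih₁ ih₂ => exact or_congr (ih₁ v) (ih₂ v)
  | box ψ ih =>
    constructor
    · exact fun h u hvu => (ih u).mp (h _ (.inner i v u hvu))
    · rintro h _ ⟨⟩
      exact (ih _).mpr (h _ ‹_›)
  | dia ψ ih =>
    constructor
    · rintro ⟨_, ⟨⟩, hsat⟩
      exact ⟨_, ‹_›, (ih _).mp hsat⟩
    · rintro ⟨u, hvu, hsat⟩
      exact ⟨_, .inner i v u hvu, (ih u).mpr hsat⟩

lemma R_refl (hrt : rt) (hM : ∀ i, ∀ a, (M i).R a a) :
    ∀ x, (model M w rt tr Vr).R x x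
  | none => .root_self hrt
  | some ⟨i, a⟩ => .inner i a a (hM i a)

lemma R_serial (hι : Nonempty ι) (hM : ∀ i, ∀ a, ∃ b, (M i).R a b) :
    ∀ x, ∃ y, (model M w rt tr Vr).R x y
  | none => ⟨_, .root_point hι.some⟩
  | some ⟨i, a⟩ => have ⟨b, hab⟩ := hM i a; ⟨_, .inner i a b hab⟩

lemma R_trans (htr : tr) (hM : ∀ i, ∀ a b c, (M i).R a b → (M i).R b c → (M i).R a c) :
    ∀ x y z, (model M w rt tr Vr).R x y → (model M w rt tr Vr).R y z →
      (model M w rt tr Vr).R x z := by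
  rintro x y z (_ | i | ⟨i, v, -, hv⟩ | ⟨i, a, b, hab⟩) hyz
  · exact hyz
  · cases hyz with | inner _ _ b hb => exact .root_succ i b htr hb
  · cases hyz with | inner _ _ b hb => exact .root_succ i b htr (hM i _ _ _ hv hb)
  · cases hyz with | inner _ _ c hbc => exact .inner i a c (hM i _ _ _ hab hbc)

lemma isFor {l : Logic} (h5 : l.has5 = false) (hM : ∀ i, (M i).IsFor l)
    (hrt : l.base = .T ∨ l.base = .S4 → rt)
    (htr : l.base = .K4 ∨ l.base = .KD4 ∨ l.base = .S4 → tr)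
    (hne : l.base = .D ∨ l.base = .KD4 → Nonempty ι) :
    (model M w rt tr Vr).IsFor l := by
  obtain ⟨base, has5⟩ := l
  subst h5
  refine ⟨?_, nofun⟩
  have hM := fun i => (hM i).1
  cases base with
  | K => trivial
  | D => exact R_serial (hne (.inl rfl)) hM
  | T => exact R_refl (hrt (.inl rfl)) hM
  | K4 => exact R_trans (htr (.inl rfl)) hM
  | KD4 =>
    exact ⟨R_serial (hne (.inr rfl)) fun i => (hM i).1,
      R_trans (htr (.inr (.inl rfl))) fun i => (hM i).2⟩
  | S4 =>
    exact ⟨R_refl (hrt (.inr rfl)) fun i => (hM i).1,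
      R_trans (htr (.inr (.inr rfl))) fun i => (hM i).2⟩

lemma sat_root_dia {ψ : Form} (i : ι) (h : (M i).sat (w i) ψ) :
    (model M w rt tr Vr).sat none (Form.dia ψ) :=
  ⟨_, .root_point i, (sat_some_iff ψ i (w i)).mpr h⟩

lemma sat_root_box {ψ : Form} (hrt : ¬rt) (htr : ¬tr) (h : ∀ i, (M i).sat (w i) ψ) :
    (model M w rt tr Vr).sat none (Form.box ψ) := by
  rintro _ (_ | i | _)
  · contradiction
  · exact (sat_some_iff ψ i (w i)).mpr (h i)
  · contradiction

end RootedSum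

noncomputable def View.model (l : Logic) (S : View) (M : S.children → Model)
    (w : ∀ c, (M c).W) : Model :=
  RootedSum.model M w (l.base = .T ∨ l.base = .S4)
    (l.base = .K4 ∨ l.base = .KD4 ∨ l.base = .S4) {p | Form.pos p ∈ S.parent}

namespace View

variable {l : Logic} {P : Finset ℕ} {S : View} {M : S.children → Model} {w : ∀ c, (M c).W}

lemma sat_model_root (hpar : Satisfiable l (th S.parent)) (hcomp : ViewLComplete l P S)
    (hw : ∀ c, (M c).sat (w c) (th c)) : ∀ ψ ∈ S.parent, (S.model l M w).sat none ψ := by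
  obtain ⟨⟨hand, hor, hboxT, -⟩, -, hdia, hbox, hbox4, -⟩ := hcomp
  have hchild {c : S.children} {ψ : Form} (hψ : ψ ∈ c.1) : (M c).sat (w c) ψ :=
    ((M c).sat_th (w c) c).mp (hw c) ψ hψ
  intro ψ
  induction ψ with
  | bot => exact fun h => absurd h (bot_notMem_of_satisfiable hpar)
  | top => exact fun _ => trivial
  | pos p => exact id
  | npos p => exact pos_notMem_of_satisfiable hpar
  | and _ _ ih₁ ih₂ => exact fun h => ⟨ih₁ (hand _ _ h).1, ih₂ (hand _ _ h).2⟩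
  | or _ _ ih₁ ih₂ => exact fun h => (hor _ _ h).imp ih₁ ih₂
  | dia ψ =>
    intro h
    obtain ⟨c, hc, hψ⟩ := hdia ψ h
    exact RootedSum.sat_root_dia ⟨c, hc⟩ (hchild hψ)
  | box ψ ih =>
    rintro h _ (hrt | c | ⟨c, v, htr, hv⟩)
    · exact ih (hboxT hrt ψ h)
    · exact (RootedSum.sat_some_iff ψ c _).mpr (hchild (hbox ψ h c c.2))
    · exact (RootedSum.sat_some_iff ψ c v).mpr (hchild (hbox4 htr ψ h c c.2) v hv)


lemma isFor_model (h5 : l.has5 = false) (hM : ∀ c, (M c).IsFor l)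
    (hne : l.base = .D ∨ l.base = .KD4 → S.children.Nonempty) : (S.model l M w).IsFor l :=
  RootedSum.isFor h5 hM id id fun h => (hne h).to_subtype

end View

theorem stmt12_general (l : Logic)
    (hl : l = Logic.K ∨ l = Logic.K4 ∨ l = Logic.KD4 ∨ l = Logic.S4)
    (φ : Form) (S : View)
    (hcons : ViewConsistent l S) (hcomp : ViewLComplete l φ.vars S) :
    (l = Logic.K →
      Satisfiable l
        (Form.and (th S.parent)
          (Form.and (bigAnd (S.children.image (fun c => Form.dia (th c))))
            (Form.box (bigOr (S.children.image th)))))) ∧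
    ((l = Logic.K4 ∨ l = Logic.KD4 ∨ l = Logic.S4) →
      Satisfiable l
        (Form.and (th S.parent)
          (bigAnd (S.children.image (fun c => Form.dia (th c)))))) := by
  choose M hM w hw using fun c : S.children => hcons.2 c c.2
  have h5 : l.has5 = false := by rcases hl with rfl | rfl | rfl | rfl <;> rfl
  have hne (hD : l.base = .D ∨ l.base = .KD4) : S.children.Nonempty := by
    refine hcomp.2.2.2.2.2 ?_
    revert hD
    rcases hl with rfl | rfl | rfl | rfl <;> decide
  have hfor : (S.model l M w).IsFor l := View.isFor_model h5 hM hne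
  have hroot : (S.model l M w).sat none (th S.parent) :=
    (Model.sat_th _ _ _).mpr (View.sat_model_root hcons.1 hcomp hw)
  have hdias : (S.model l M w).sat none (bigAnd (S.children.image fun c => Form.dia (th c))) := by
    refine (Model.sat_bigAnd _ _ _).mpr fun _ hψ => ?_
    obtain ⟨c, hc, rfl⟩ := Finset.mem_image.mp hψ
    exact RootedSum.sat_root_dia ⟨c, hc⟩ (hw _)
  refine ⟨?_, fun _ => ⟨_, hfor, none, hroot, hdias⟩⟩
  rintro rfl
  refine ⟨_, hfor, none, hroot, hdias, RootedSum.sat_root_box (by decide) (by decide) ?_⟩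
  exact fun c => (Model.sat_bigOr _ _ _).mpr ⟨th c, Finset.mem_image_of_mem th c.2, hw c⟩

/-- for a consistent l-complete view S with C(S) ≠ ∅,
the indicated formulas are satisfiable for l. -/
theorem stmt12 (l : Logic)
    (hl : l = Logic.K ∨ l = Logic.K4 ∨ l = Logic.KD4 ∨ l = Logic.S4)
    (φ : Form) (S : View) (hWF : S.WF φ)
    (hcons : ViewConsistent l S) (hcomp : ViewLComplete l φ.vars S)
    (hne : S.children.Nonempty) :
    (l = Logic.K →
      Satisfiable l
        (Form.and (th S.parent)
          (Form.and (bigAnd (S.children.image (fun c => Form.dia (th c))))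
            (Form.box (bigOr (S.children.image th)))))) ∧
    ((l = Logic.K4 ∨ l = Logic.KD4 ∨ l = Logic.S4) →
      Satisfiable l
        (Form.and (th S.parent)
          (bigAnd (S.children.image (fun c => Form.dia (th c)))))) :=
  stmt12_general l hl φ S hcons hcomp
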